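/- arXiv:1509.07278 — 4 statements merged into one kernel-verified Lean document; each statement's English description precedes it below -/
import Mathlib

section
/- Let Q = (q_1, …, q_k) be a list of sequences of labeled bins with n bins in total, and let p be a positive integer. Then Q can be processed with at most p stack-up places if and only if there exists a bijection π from the set of all bins of Q onto {1, …, n} that is strictly increasing along each sequence q_j (i.e., if bin b precedes bin b' in some q_j then π(b) < π(b')), such that for every c with 1 ≤ c ≤ n − 1, the number of pallets t for which some bin labeled t has π-value ≤ c and some bin labeled t has π-value > c is at most p. (This is the correctness content of the integer linear program computing a bin solution.) -/
/-- A pallet `t` is open in configuration `c`: some bin labeled `t` has already been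
removed (0-based index `< c j` in some sequence) and some bin labeled `t` remains
(0-based index `≥ c l` in some sequence). -/
def OpenPallet {k : ℕ} {P : Type} (Q : Fin k → List P) (c : Fin k → ℕ) (t : P) : Prop :=
  (∃ j, ∃ i, i < c j ∧ (Q j)[i]? = some t) ∧
  (∃ l, ∃ i, c l ≤ i ∧ (Q l)[i]? = some t)

/-- A configuration of the instance `Q`. -/
def IsConfig {k : ℕ} {P : Type} (Q : Fin k → List P) (c : Fin k → ℕ) : Prop :=
  ∀ j, c j ≤ (Q j).length

/-- The number of open pallets in configuration `c`. -/
noncomputable def numOpen {k : ℕ} {P : Type} (Q : Fin k → List P) (c : Fin k → ℕ) : ℕ :=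
  {t | OpenPallet Q c t}.ncard

/-- A processing of `Q`: a sequence of configurations from `(0,…,0)` to
`(|q_1|,…,|q_k|)`, each step increasing exactly one coordinate by one. -/
def IsProcessing {k : ℕ} {P : Type} (Q : Fin k → List P) (n : ℕ) (f : ℕ → Fin k → ℕ) : Prop :=
  (∀ i, i ≤ n → IsConfig Q (f i)) ∧
  (∀ j, f 0 j = 0) ∧
  (∀ j, f n j = (Q j).length) ∧
  (∀ i, i < n → ∃ j, f (i + 1) j = f i j + 1 ∧ ∀ j', j' ≠ j → f (i + 1) j' = f i j')

/-- `Q` can be processed with at most `p` stack-up places. -/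
def CanProcess {k : ℕ} {P : Type} (Q : Fin k → List P) (p : ℕ) : Prop :=
  ∃ n f, IsProcessing Q n f ∧ ∀ i, i ≤ n → numOpen Q (f i) ≤ p

/-- Pallet `t` occurs in `Q`. -/
def occursIn {k : ℕ} {P : Type} (Q : Fin k → List P) (t : P) : Prop :=
  ∃ j, t ∈ Q j

/-- The arc relation of the sequence graph `G_Q`. -/
def seqArc {k : ℕ} {P : Type} (Q : Fin k → List P) (u v : P) : Prop :=
  u ≠ v ∧ ∃ j, ∃ i1 i2 : ℕ, i1 < i2 ∧ (Q j)[i1]? = some u ∧ (Q j)[i2]? = some v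

/-- The bins of the instance `Q`, given by a sequence index and a position. -/
abbrev Bins {k : ℕ} {P : Type} (Q : Fin k → List P) : Type :=
  (j : Fin k) × Fin (Q j).length

/-- The pallet label of a bin. -/
def binLabel {k : ℕ} {P : Type} (Q : Fin k → List P) (b : Bins Q) : P :=
  (Q b.1).get b.2

/-- A downward closed finset of `Fin N` is determined by its cardinality. -/
lemma StackUp.mem_iff_lt_card {N : ℕ} (S : Finset (Fin N))
    (hS : ∀ a b : Fin N, a ≤ b → b ∈ S → a ∈ S) (i : Fin N) :
    i ∈ S ↔ (i : ℕ) < S.card := by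
  constructor
  · intro hi
    have h1 : Finset.Iic i ⊆ S := fun a ha => hS a i (Finset.mem_Iic.mp ha) hi
    have := Finset.card_le_card h1
    rw [Fin.card_Iic] at this; omega
  · intro hi
    by_contra hni
    have h1 : S ⊆ Finset.Iio i := by
      intro a ha
      rw [Finset.mem_Iio]
      by_contra hai
      exact hni (hS i a (le_of_not_gt hai) ha)
    have := Finset.card_le_card h1
    rw [Fin.card_Iio] at this; omega

/-- If configuration `c` is the prefix determined by cut `m` under the ordering `π`,
then the open pallets at `c` are exactly the pallets crossing the cut `m`. -/
lemma StackUp.openSet_eq {P : Type} {k : ℕ} (Q : Fin k → List P)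
    (π : Bins Q ≃ Fin (∑ j, (Q j).length)) (m : ℕ) (c : Fin k → ℕ)
    (key : ∀ (j : Fin k) (i : Fin (Q j).length), (i : ℕ) < c j ↔ (π ⟨j, i⟩ : ℕ) < m) :
    {t | OpenPallet Q c t} =
      {t : P | (∃ b : Bins Q, binLabel Q b = t ∧ (π b : ℕ) < m) ∧
               (∃ b : Bins Q, binLabel Q b = t ∧ m ≤ (π b : ℕ))} := by
  ext t
  simp only [Set.mem_setOf_eq, OpenPallet]
  constructor
  · rintro ⟨⟨j, i, hi, hget⟩, ⟨l, i', hi', hget'⟩⟩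
    obtain ⟨hlt, hval⟩ := List.getElem?_eq_some_iff.mp hget
    obtain ⟨hlt', hval'⟩ := List.getElem?_eq_some_iff.mp hget'
    refine ⟨⟨⟨j, ⟨i, hlt⟩⟩, hval, ?_⟩, ⟨⟨l, ⟨i', hlt'⟩⟩, hval', ?_⟩⟩
    · exact (key j ⟨i, hlt⟩).mp hi
    · refine le_of_not_gt (fun h => absurd ((key l ⟨i', hlt'⟩).mpr h) ?_)
      simp only [Fin.val_mk]; omega
  · rintro ⟨⟨⟨j, i⟩, hlab, hπ⟩, ⟨⟨l, i'⟩, hlab', hπ'⟩⟩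
    refine ⟨⟨j, i, (key j i).mpr hπ, ?_⟩, ⟨l, i', ?_, ?_⟩⟩
    · exact List.getElem?_eq_some_iff.mpr ⟨i.isLt, hlab⟩
    · by_contra h
      exact absurd ((key l i').mp (lt_of_not_ge h)) (by omega)
    · exact List.getElem?_eq_some_iff.mpr ⟨i'.isLt, hlab'⟩

/-- `Q` can be processed with at most `p` stack-up places iff there is a bijection `π`
from the bins onto `{1,…,n}` (here 0-indexed via `Fin n`), strictly increasing along
each sequence, such that every cut `c ∈ {1,…,n-1}` is crossed by at most `p` pallets.
(Correctness of the ILP computing a bin solution.) -/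
theorem stmt4 {P : Type} {k : ℕ} (Q : Fin k → List P) (p : ℕ) (hp : 1 ≤ p) :
    CanProcess Q p ↔
      ∃ π : Bins Q ≃ Fin (∑ j, (Q j).length),
        (∀ j : Fin k, ∀ i1 i2 : Fin (Q j).length, i1 < i2 → π ⟨j, i1⟩ < π ⟨j, i2⟩) ∧
        (∀ c : ℕ, 1 ≤ c → c ≤ (∑ j, (Q j).length) - 1 →
          {t : P | (∃ b : Bins Q, binLabel Q b = t ∧ (π b : ℕ) < c) ∧
                   (∃ b : Bins Q, binLabel Q b = t ∧ c ≤ (π b : ℕ))}.ncard ≤ p) := by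
  set n := ∑ j, (Q j).length with hn
  constructor
  · -- forward direction
    rintro ⟨n', f, ⟨hconf, hf0, hfn, hstep⟩, hbound⟩
    choose J hJ1 hJ2 using hstep
    -- each step is nondecreasing
    have hstep_le : ∀ (j : Fin k) (i : ℕ), (h : i < n') → f i j ≤ f (i + 1) j := by
      intro j i hi
      by_cases h : j = J i hi
      · subst h; rw [hJ1]; omega
      · rw [hJ2 i hi j h]
    have hmono' : ∀ (j : Fin k) (m m' : ℕ), m ≤ m' → m' ≤ n' → f m j ≤ f m' j := by
      intro j m m' hmm' hm'
      induction m' with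
      | zero => have : m = 0 := by omega
                subst this; exact le_rfl
      | succ l ih =>
        rcases Nat.lt_or_ge m (l + 1) with h | h
        · exact le_trans (ih (by omega) (by omega)) (hstep_le j l (by omega))
        · have : m = l + 1 := by omega
          subst this; exact le_rfl
    -- the number of steps equals the total number of bins
    have hsum : ∀ m, (hm : m ≤ n') → ∑ j, f m j = m := by
      intro m
      induction m with
      | zero => intro _; simp [hf0]
      | succ l ih =>
        intro hl
        have hln : l < n' := by omega
        have h1 : ∀ j', f (l + 1) j' = f l j' + if j' = J l hln then 1 else 0 := by
          intro j'
          by_cases h : j' = J l hln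
          · rw [h, hJ1]; simp
          · rw [hJ2 l hln j' h]; simp [h]
        rw [Finset.sum_congr rfl (fun j _ => h1 j), Finset.sum_add_distrib,
          ih (by omega), Finset.sum_ite_eq' Finset.univ (J l hln) (fun _ => 1)]
        simp
    have hn' : n' = n := by
      rw [hn, ← hsum n' le_rfl]
      exact Finset.sum_congr rfl fun j _ => hfn j
    subst hn'
    -- the bin removed at step m
    have hlt2 : ∀ (m : ℕ) (hm : m < n), f m (J m hm) < (Q (J m hm)).length := by
      intro m hm
      have h1 := hconf (m + 1) (by omega) (J m hm)
      rw [hJ1 m hm] at h1; omega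
    set g : Fin n → Bins Q := fun m => ⟨J m m.isLt, ⟨f m (J m m.isLt), hlt2 m m.isLt⟩⟩ with hg
    have key2 : ∀ m m' : Fin n, (m : ℕ) < (m' : ℕ) → g m ≠ g m' := by
      intro m m' hlt h
      have h1 : J m m.isLt = J m' m'.isLt := congrArg Sigma.fst h
      have h2 : f m (J m m.isLt) = f m' (J m' m'.isLt) :=
        congrArg (fun b : Bins Q => (b.2 : ℕ)) h
      rw [← h1] at h2
      have h3 : f (↑m + 1) (J m m.isLt) ≤ f m' (J m m.isLt) :=
        hmono' (J m m.isLt) (↑m + 1) m' (by omega) (by omega)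
      rw [hJ1 m m.isLt] at h3
      omega
    have hginj : Function.Injective g := by
      intro m m' h
      rcases lt_trichotomy (m : ℕ) (m' : ℕ) with hl | he | hl
      · exact absurd h (key2 m m' hl)
      · exact Fin.ext he
      · exact absurd h.symm (key2 m' m hl)
    have hgbij : Function.Bijective g :=
      (Fintype.bijective_iff_injective_and_card g).mpr ⟨hginj, by simp only [Fintype.card_sigma, Fintype.card_fin, hn]⟩
    set e := Equiv.ofBijective g hgbij with he
    refine ⟨e.symm, ?_, ?_⟩
    all_goals
      have hginv : ∀ b : Bins Q, g (e.symm b) = b := fun b => e.apply_symm_apply b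
      have hfacts : ∀ b : Bins Q, f (e.symm b) b.1 = (b.2 : ℕ) ∧
          f ((e.symm b : ℕ) + 1) b.1 = (b.2 : ℕ) + 1 := by
        intro b
        have h := hginv b
        set m := e.symm b with hm
        have h1 : J m m.isLt = b.1 := congrArg Sigma.fst h
        have h2 : f m (J m m.isLt) = (b.2 : ℕ) := congrArg (fun b : Bins Q => (b.2 : ℕ)) h
        have h3 := hJ1 m m.isLt
        rw [h1] at h2 h3
        exact ⟨h2, by omega⟩
    · -- strictly increasing along sequences
      intro j i1 i2 h12
      by_contra hcon
      push_neg at hcon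
      have ha := (hfacts ⟨j, i1⟩).1
      have hb := (hfacts ⟨j, i2⟩).1
      have := hmono' j (e.symm ⟨j, i2⟩) (e.symm ⟨j, i1⟩) hcon (by omega)
      simp only at ha hb
      omega
    · -- cut bound
      intro c hc1 hc2
      have hcn : c ≤ n := by omega
      have key : ∀ (j : Fin k) (i : Fin (Q j).length),
          (i : ℕ) < f c j ↔ (e.symm ⟨j, i⟩ : ℕ) < c := by
        intro j i
        obtain ⟨ha, hb⟩ := hfacts ⟨j, i⟩
        simp only at ha hb
        constructor
        · intro h
          by_contra h2
          push_neg at h2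
          have := hmono' j c (e.symm ⟨j, i⟩) h2 (by omega)
          omega
        · intro h
          have := hmono' j ((e.symm ⟨j, i⟩ : ℕ) + 1) c (by omega) hcn
          omega
      have h4 := hbound c hcn
      rw [numOpen, StackUp.openSet_eq Q e.symm c (f c) key] at h4
      exact h4
  · -- backward direction
    rintro ⟨π, hmono, hcut⟩
    classical
    set f : ℕ → Fin k → ℕ := fun m j =>
      (Finset.univ.filter (fun i : Fin (Q j).length => ((π ⟨j, i⟩ : ℕ) < m))).card with hf
    have key : ∀ (m : ℕ) (j : Fin k) (i : Fin (Q j).length),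
        (i : ℕ) < f m j ↔ (π ⟨j, i⟩ : ℕ) < m := by
      intro m j i
      rw [hf]
      rw [← StackUp.mem_iff_lt_card _ ?_ i, Finset.mem_filter]
      · simp
      · intro a b hab hb
        simp only [Finset.mem_filter, Finset.mem_univ, true_and] at hb ⊢
        rcases eq_or_lt_of_le hab with h | h
        · subst h; exact hb
        · exact lt_trans (hmono j a b h) hb
    have hconf : ∀ m, IsConfig Q (f m) := by
      intro m j
      rw [hf]
      exact le_trans (Finset.card_filter_le _ _) (by simp)
    refine ⟨n, f, ⟨fun i _ => hconf i, ?_, ?_, ?_⟩, ?_⟩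
    · intro j; simp [hf]
    · intro j
      rw [hf]
      simp only
      rw [Finset.filter_true_of_mem (fun i _ => (π ⟨j, i⟩).isLt)]
      simp
    · -- the step property
      intro m hm
      refine ⟨(π.symm ⟨m, hm⟩).1, ?_, ?_⟩
      · set b := π.symm ⟨m, hm⟩ with hb
        have hπb : π ⟨b.1, b.2⟩ = ⟨m, hm⟩ := by rw [Sigma.eta]; exact π.apply_symm_apply _
        rw [hf]
        simp only
        have hsplit : (Finset.univ.filter
              (fun i : Fin (Q b.1).length => (π ⟨b.1, i⟩ : ℕ) < m + 1))
            = insert b.2 (Finset.univ.filter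
              (fun i : Fin (Q b.1).length => (π ⟨b.1, i⟩ : ℕ) < m)) := by
          ext i
          simp only [Finset.mem_filter, Finset.mem_univ, true_and, Finset.mem_insert]
          constructor
          · intro h
            rcases Nat.lt_succ_iff_lt_or_eq.mp h with h | h
            · exact Or.inr h
            · left
              have h1 : π ⟨b.1, i⟩ = π ⟨b.1, b.2⟩ := by rw [hπb]; exact Fin.ext h
              have h2 := π.injective h1
              rw [← Sigma.eta b] at hb
              obtain ⟨j0, x0⟩ := b
              exact eq_of_heq (Sigma.mk.inj_iff.mp h2).2
          · rintro (h | h)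
            · subst h
              rw [hπb]
              simp only [Fin.val_mk]
              omega
            · omega
        have hnotmem : b.2 ∉ Finset.univ.filter
            (fun i : Fin (Q b.1).length => (π ⟨b.1, i⟩ : ℕ) < m) := by
          simp only [Finset.mem_filter, Finset.mem_univ, true_and, hπb, Fin.val_mk]
          omega
        rw [hsplit, Finset.card_insert_of_notMem hnotmem]
      · intro j' hj'
        rw [hf]
        simp only
        apply congrArg Finset.card
        apply Finset.filter_congr
        intro i _
        have hne : (π ⟨j', i⟩ : ℕ) ≠ m := by
          intro h
          have h1 : π ⟨j', i⟩ = ⟨m, hm⟩ := Fin.ext h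
          have h2 : (⟨j', i⟩ : Bins Q) = π.symm ⟨m, hm⟩ := by
            rw [← h1, π.symm_apply_apply]
          exact hj' (congrArg Sigma.fst h2)
        omega
    · -- the bound on open pallets
      intro m hm
      rw [numOpen, StackUp.openSet_eq Q π m (f m) (key m)]
      rcases Nat.eq_zero_or_pos m with h0 | h1
      · subst h0
        have : {t : P | (∃ b : Bins Q, binLabel Q b = t ∧ (π b : ℕ) < 0) ∧
            (∃ b : Bins Q, binLabel Q b = t ∧ 0 ≤ (π b : ℕ))} = ∅ := by
          ext t; simp
        rw [this, Set.ncard_empty]; omega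
      · rcases Nat.lt_or_ge m n with h2 | h2
        · exact hcut m h1 (by omega)
        · have hmn : m = n := by omega
          have : {t : P | (∃ b : Bins Q, binLabel Q b = t ∧ (π b : ℕ) < m) ∧
              (∃ b : Bins Q, binLabel Q b = t ∧ m ≤ (π b : ℕ))} = ∅ := by
            ext t
            simp only [Set.mem_setOf_eq, Set.mem_empty_iff_false, iff_false, not_and]
            rintro - ⟨b, -, hb⟩
            exact absurd (π b).isLt (by omega)
          rw [this, Set.ncard_empty]; omega
end

section
/- Let Q = (q_1, …, q_k) be a list of sequences of labeled bins in which every pallet label occurs on at least two bins. Let C = (i_1, …, i_k) be a configuration with i_j < |q_j|, let t be the pallet label of the bin at position i_j + 1 in q_j, and let C' = (i_1, …, i_{j−1}, i_j + 1, i_{j+1}, …, i_k). Then the number of open pallets satisfies #open(C') = #open(C) + c, where c = 1 if first(q_j, t) = i_j + 1 and first(q_ℓ, t) > i_ℓ for all ℓ ≠ j; c = −1 if last(q_j, t) = i_j + 1 and last(q_ℓ, t) ≤ i_ℓ for all ℓ ≠ j; and c = 0 otherwise. -/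
/-- `first(q, t)`: the 1-indexed position of the first bin labeled `t` in `q`,
and `|q| + 1` if no bin labeled `t` occurs in `q`. -/
def firstPos {P : Type} [DecidableEq P] (q : List P) (t : P) : ℕ :=
  q.idxOf t + 1

/-- `last(q, t)`: the 1-indexed position of the last bin labeled `t` in `q`,
and `0` if no bin labeled `t` occurs in `q`. -/
def lastPos {P : Type} [DecidableEq P] (q : List P) (t : P) : ℕ :=
  q.length - q.reverse.idxOf t



section Aux
variable {P : Type} [DecidableEq P]
set_option linter.unusedSectionVars false

lemma indexOf_le_of_getElem? {q : List P} {t : P} {i : ℕ} (h : q[i]? = some t) :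
    q.idxOf t ≤ i := by
  induction q generalizing i with
  | nil => simp at h
  | cons a q ih =>
    cases i with
    | zero => simp_all
    | succ n =>
      simp only [List.getElem?_cons_succ] at h
      by_cases hat : a = t
      · subst hat; simp
      · rw [List.idxOf_cons_ne _ hat]
        exact Nat.succ_le_succ (ih h)

lemma getElem?_indexOf_self {q : List P} {t : P} (h : t ∈ q) :
    q[q.idxOf t]? = some t := by
  have hl : q.idxOf t < q.length := List.idxOf_lt_length_iff.2 h
  rw [List.getElem?_eq_getElem hl, List.getElem_idxOf hl]

lemma mem_of_getElem? {q : List P} {t : P} {i : ℕ} (h : q[i]? = some t) : t ∈ q :=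
  List.mem_iff_getElem?.2 ⟨i, h⟩

lemma lt_lastPos_of_getElem? {q : List P} {t : P} {i : ℕ} (h : q[i]? = some t) :
    i < lastPos q t := by
  have hi : i < q.length := (List.getElem?_eq_some_iff.1 h).1
  have hr : q.reverse[q.length - 1 - i]? = some t := by
    rw [List.getElem?_reverse (by omega)]
    have he : q.length - 1 - (q.length - 1 - i) = i := by omega
    rw [he]; exact h
  have := indexOf_le_of_getElem? hr
  unfold lastPos
  omega

lemma getElem?_lastPos {q : List P} {t : P} (h : t ∈ q) :
    q[lastPos q t - 1]? = some t := by
  have hm : t ∈ q.reverse := by simpa using h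
  have hr : q.reverse.idxOf t < q.length := by
    have := List.idxOf_lt_length_iff.2 hm; simpa using this
  have h0 := getElem?_indexOf_self hm
  rw [List.getElem?_reverse (by simpa using hr)] at h0
  have he : lastPos q t - 1 = q.length - 1 - q.reverse.idxOf t := by
    unfold lastPos; omega
  rw [he]
  simpa using h0

lemma one_le_lastPos_of_mem {q : List P} {t : P} (h : t ∈ q) : 1 ≤ lastPos q t := by
  have hm : t ∈ q.reverse := by simpa using h
  have hr : q.reverse.idxOf t < q.reverse.length := List.idxOf_lt_length_iff.2 hm
  rw [List.length_reverse] at hr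
  unfold lastPos; omega

lemma mem_of_lastPos_pos {q : List P} {t : P} (h : 0 < lastPos q t) : t ∈ q := by
  unfold lastPos at h
  have : q.reverse.idxOf t < q.reverse.length := by rw [List.length_reverse]; omega
  have := List.idxOf_lt_length_iff.1 this
  simpa using this

lemma exists_two_of_two_le_count {q : List P} {t : P} (h : 2 ≤ q.count t) :
    ∃ i1 i2 : ℕ, i1 < i2 ∧ q[i1]? = some t ∧ q[i2]? = some t := by
  induction q with
  | nil => simp at h
  | cons a q ih =>
    rw [List.count_cons] at h
    by_cases hat : a = t
    · subst hat
      simp only [beq_self_eq_true, if_pos] at h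
      have h1 : 0 < q.count a := by omega
      obtain ⟨m, hm⟩ := List.mem_iff_getElem?.1 (List.count_pos_iff.1 h1)
      refine ⟨0, m + 1, Nat.succ_pos m, by simp, ?_⟩
      rw [List.getElem?_cons_succ]; exact hm
    · simp only [beq_iff_eq, hat, if_false] at h
      obtain ⟨i1, i2, h12, ha, hb⟩ := ih (by omega)
      refine ⟨i1 + 1, i2 + 1, by omega, ?_, ?_⟩
      · rw [List.getElem?_cons_succ]; exact ha
      · rw [List.getElem?_cons_succ]; exact hb

end Aux

open Classical in
/-- Removing the next bin (labeled `t`) from sequence `q_j` changes the number of open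
pallets by `+1` if this opens pallet `t`, by `-1` if this closes pallet `t`, and by `0`
otherwise. -/
theorem stmt7 {P : Type} [DecidableEq P] {k : ℕ} (Q : Fin k → List P)
    (h2 : ∀ t : P, occursIn Q t → 2 ≤ ∑ j, (Q j).count t)
    (c : Fin k → ℕ) (hc : IsConfig Q c)
    (j : Fin k) (hj : c j < (Q j).length) (t : P)
    (ht : (Q j)[c j]? = some t) :
    (numOpen Q (Function.update c j (c j + 1)) : ℤ) =
      (numOpen Q c : ℤ) +
        (if firstPos (Q j) t = c j + 1 ∧ (∀ l, l ≠ j → c l < firstPos (Q l) t) then 1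
         else if lastPos (Q j) t = c j + 1 ∧ (∀ l, l ≠ j → lastPos (Q l) t ≤ c l) then -1
         else 0) := by
  classical
  set c' := Function.update c j (c j + 1) with hc'def
  have hc'j : c' j = c j + 1 := Function.update_self _ _ _
  have hc'ne : ∀ l, l ≠ j → c' l = c l := fun l hl => Function.update_of_ne hl _ _
  have htmem : t ∈ Q j := mem_of_getElem? ht
  have hRc' : ∃ l, ∃ i, i < c' l ∧ (Q l)[i]? = some t :=
    ⟨j, c j, by rw [hc'j]; omega, ht⟩
  have hSc : ∃ l, ∃ i, c l ≤ i ∧ (Q l)[i]? = some t := ⟨j, c j, le_refl _, ht⟩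
  have h2t : 2 ≤ ∑ l, (Q l).count t := h2 t ⟨j, htmem⟩
  -- translation of condition 1
  have e1 : (firstPos (Q j) t = c j + 1 ∧ ∀ l, l ≠ j → c l < firstPos (Q l) t) ↔
      ¬ ∃ l, ∃ i, i < c l ∧ (Q l)[i]? = some t := by
    constructor
    · rintro ⟨h1, hrest⟩ ⟨l, i, hi, ho⟩
      have hle := indexOf_le_of_getElem? ho
      by_cases hl : l = j
      · subst hl; unfold firstPos at h1; omega
      · have := hrest l hl; unfold firstPos at this; omega
    · intro hn
      have hidx : (Q j).idxOf t ≤ c j := indexOf_le_of_getElem? ht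
      constructor
      · unfold firstPos
        rcases Nat.lt_or_ge ((Q j).idxOf t) (c j) with h | h
        · exact absurd ⟨j, _, h, getElem?_indexOf_self htmem⟩ hn
        · omega
      · intro l hl
        unfold firstPos
        by_contra hcon
        push_neg at hcon
        have hlen : (Q l).idxOf t < (Q l).length := by have := hc l; omega
        have hmem : t ∈ Q l := List.idxOf_lt_length_iff.1 hlen
        exact hn ⟨l, _, by omega, getElem?_indexOf_self hmem⟩
  -- translation of condition 2
  have e2 : (lastPos (Q j) t = c j + 1 ∧ ∀ l, l ≠ j → lastPos (Q l) t ≤ c l) ↔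
      ¬ ∃ l, ∃ i, c' l ≤ i ∧ (Q l)[i]? = some t := by
    constructor
    · rintro ⟨h1, hrest⟩ ⟨l, i, hi, ho⟩
      have hlt := lt_lastPos_of_getElem? ho
      by_cases hl : l = j
      · subst hl; rw [hc'j] at hi; omega
      · rw [hc'ne l hl] at hi; have := hrest l hl; omega
    · intro hn
      have hlt : c j < lastPos (Q j) t := lt_lastPos_of_getElem? ht
      constructor
      · rcases Nat.lt_or_ge (c j + 1) (lastPos (Q j) t) with h | h
        · exact absurd ⟨j, lastPos (Q j) t - 1, by rw [hc'j]; omega,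
            getElem?_lastPos htmem⟩ hn
        · omega
      · intro l hl
        by_contra hcon
        push_neg at hcon
        have hmem : t ∈ Q l := mem_of_lastPos_pos (by omega)
        refine hn ⟨l, lastPos (Q l) t - 1, ?_, getElem?_lastPos hmem⟩
        rw [hc'ne l hl]; omega
  -- count of t concentrated in Q j when t occurs nowhere else
  have hcnt : (∀ l, l ≠ j → t ∉ Q l) → 2 ≤ (Q j).count t := by
    intro hex
    have : (∑ l, (Q l).count t) = (Q j).count t := by
      refine Finset.sum_eq_single j (fun l _ hl => List.count_eq_zero.2 (hex l hl))
        (fun h => absurd (Finset.mem_univ j) h)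
    omega
  -- if t is not removed-before in c, then t remains after c'
  have h2a : (¬ ∃ l, ∃ i, i < c l ∧ (Q l)[i]? = some t) →
      ∃ l, ∃ i, c' l ≤ i ∧ (Q l)[i]? = some t := by
    intro hn
    by_cases hex : ∃ l, l ≠ j ∧ t ∈ Q l
    · obtain ⟨l, hl, hm⟩ := hex
      refine ⟨l, (Q l).idxOf t, ?_, getElem?_indexOf_self hm⟩
      rw [hc'ne l hl]
      by_contra hcon
      push_neg at hcon
      exact hn ⟨l, _, hcon, getElem?_indexOf_self hm⟩
    · push_neg at hex
      obtain ⟨i1, i2, h12, ha, hb⟩ := exists_two_of_two_le_count (hcnt hex)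
      have hA : c j ≤ i1 := by
        by_contra hcon
        push_neg at hcon
        exact hn ⟨j, i1, hcon, ha⟩
      exact ⟨j, i2, by rw [hc'j]; omega, hb⟩
  -- if t does not remain after c', then t was removed before c
  have h2b : (¬ ∃ l, ∃ i, c' l ≤ i ∧ (Q l)[i]? = some t) →
      ∃ l, ∃ i, i < c l ∧ (Q l)[i]? = some t := by
    intro hn
    by_cases hex : ∃ l, l ≠ j ∧ t ∈ Q l
    · obtain ⟨l, hl, hm⟩ := hex
      have h1 := one_le_lastPos_of_mem hm
      refine ⟨l, lastPos (Q l) t - 1, ?_, getElem?_lastPos hm⟩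
      by_contra hcon
      push_neg at hcon
      exact hn ⟨l, lastPos (Q l) t - 1, by rw [hc'ne l hl]; exact hcon,
        getElem?_lastPos hm⟩
    · push_neg at hex
      obtain ⟨i1, i2, h12, ha, hb⟩ := exists_two_of_two_le_count (hcnt hex)
      have hB : i2 < c j + 1 := by
        by_contra hcon
        push_neg at hcon
        exact hn ⟨j, i2, by rw [hc'j]; exact hcon, hb⟩
      exact ⟨j, i1, by omega, ha⟩
  -- pallets other than t are unaffected
  have hother : ∀ s, s ≠ t → (OpenPallet Q c' s ↔ OpenPallet Q c s) := by
    intro s hs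
    constructor
    · rintro ⟨⟨l, i, hi, ho⟩, ⟨l', i', hi', ho'⟩⟩
      refine ⟨⟨l, i, ?_, ho⟩, ⟨l', i', ?_, ho'⟩⟩
      · by_cases hl : l = j
        · subst hl
          rw [hc'j] at hi
          rcases Nat.lt_or_ge i (c l) with h | h
          · exact h
          · have hieq : i = c l := by omega
            subst hieq
            exact absurd (Option.some.inj (ho.symm.trans ht)) hs
        · rw [hc'ne l hl] at hi; exact hi
      · by_cases hl : l' = j
        · subst hl; rw [hc'j] at hi'; omega
        · rw [hc'ne l' hl] at hi'; exact hi'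
    · rintro ⟨⟨l, i, hi, ho⟩, ⟨l', i', hi', ho'⟩⟩
      refine ⟨⟨l, i, ?_, ho⟩, ⟨l', i', ?_, ho'⟩⟩
      · by_cases hl : l = j
        · subst hl; rw [hc'j]; omega
        · rw [hc'ne l hl]; exact hi
      · by_cases hl : l' = j
        · subst hl
          rw [hc'j]
          rcases Nat.lt_or_ge (c l') i' with h | h
          · omega
          · have hieq : i' = c l' := by omega
            subst hieq
            exact absurd (Option.some.inj (ho'.symm.trans ht)) hs
        · rw [hc'ne l' hl]; exact hi'
  -- finiteness
  have hfin : ∀ d : Fin k → ℕ, {s | OpenPallet Q d s}.Finite := by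
    intro d
    apply Set.Finite.subset (Set.finite_iUnion (fun l => (Q l).finite_toSet))
    rintro s ⟨-, ⟨l, i, -, ho⟩⟩
    exact Set.mem_iUnion.2 ⟨l, mem_of_getElem? ho⟩
  by_cases h1 : firstPos (Q j) t = c j + 1 ∧ ∀ l, l ≠ j → c l < firstPos (Q l) t
  · rw [if_pos h1]
    have hnotRem := e1.1 h1
    have htS : t ∉ {s | OpenPallet Q c s} := fun h => hnotRem h.1
    have htS' : OpenPallet Q c' t := ⟨hRc', h2a hnotRem⟩
    have hset : {s | OpenPallet Q c' s} = insert t {s | OpenPallet Q c s} := by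
      ext s
      simp only [Set.mem_setOf_eq, Set.mem_insert_iff]
      by_cases hs : s = t
      · subst hs; simp [htS']
      · rw [hother s hs]; simp [hs]
    unfold numOpen
    rw [hset, Set.ncard_insert_of_notMem htS (hfin c)]
    push_cast; ring
  · rw [if_neg h1]
    have hRem : ∃ l, ∃ i, i < c l ∧ (Q l)[i]? = some t := by
      by_contra h; exact h1 (e1.2 h)
    by_cases h2c : lastPos (Q j) t = c j + 1 ∧ ∀ l, l ≠ j → lastPos (Q l) t ≤ c l
    · rw [if_pos h2c]
      have hnotStay := e2.1 h2c
      have htS' : t ∉ {s | OpenPallet Q c' s} := fun h => hnotStay h.2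
      have htS : OpenPallet Q c t := ⟨hRem, hSc⟩
      have hset : {s | OpenPallet Q c s} = insert t {s | OpenPallet Q c' s} := by
        ext s
        simp only [Set.mem_setOf_eq, Set.mem_insert_iff]
        by_cases hs : s = t
        · subst hs; simp [htS]
        · rw [hother s hs]; simp [hs]
      unfold numOpen
      rw [hset, Set.ncard_insert_of_notMem htS' (hfin c')]
      push_cast; ring
    · rw [if_neg h2c]
      have hStay' : ∃ l, ∃ i, c' l ≤ i ∧ (Q l)[i]? = some t := by
        by_contra h; exact h2c (e2.2 h)
      have hset : {s | OpenPallet Q c' s} = {s | OpenPallet Q c s} := by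
        ext s
        simp only [Set.mem_setOf_eq]
        by_cases hs : s = t
        · subst hs
          exact iff_of_true ⟨hRc', hStay'⟩ ⟨hRem, hSc⟩
        · exact hother s hs
      unfold numOpen
      rw [hset]; ring
end

section
/- Let Q = (q_1, …, q_k) be a list of sequences of labeled bins, let a_1, b_1, c_1, …, a_k, b_k, c_k be 3k pairwise distinct new pallet labels not occurring in Q, and let Q' = (q'_1, …, q'_k) where q'_i is the concatenation of q_i with the six bins labeled a_i, a_i, b_i, b_i, c_i, c_i in this order. Then for every integer p ≥ 1, Q can be processed with at most p stack-up places if and only if Q' can be processed with at most p stack-up places. -/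
lemma openSet_finite {k : ℕ} {P : Type} (Q : Fin k → List P) (c : Fin k → ℕ) :
    {t | OpenPallet Q c t}.Finite := by
  apply Set.Finite.subset (Set.finite_iUnion (fun j => (Q j).finite_toSet))
  rintro t ⟨⟨j, i, hi, ht⟩, -⟩
  exact Set.mem_iUnion.2 ⟨j, List.mem_of_getElem? ht⟩

lemma extras_get {P : Type} {k : ℕ} (f : Fin k × Fin 3 → P) (l : Fin k) {m : ℕ} {t : P}
    (h : ([f (l,0), f (l,0), f (l,1), f (l,1), f (l,2), f (l,2)] : List P)[m]? = some t) :
    ∃ r : Fin 3, t = f (l, r) ∧ m / 2 = (r : ℕ) ∧ m < 6 := by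
  have hm : m < 6 := by
    by_contra hm
    rw [List.getElem?_eq_none (by simpa using Nat.le_of_not_lt hm)] at h
    exact nomatch h
  interval_cases m <;> simp at h <;>
    first
    | exact ⟨0, h.symm, by norm_num, by norm_num⟩
    | exact ⟨1, h.symm, by norm_num, by norm_num⟩
    | exact ⟨2, h.symm, by norm_num, by norm_num⟩

lemma compress {k : ℕ} {P : Type} (Q : Fin k → List P) (p : ℕ) :
    ∀ n (g : ℕ → Fin k → ℕ),
    (∀ i, i ≤ n → IsConfig Q (g i)) →
    (∀ j, g n j = (Q j).length) →
    (∀ i, i < n → (∀ j, g (i+1) j = g i j) ∨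
      (∃ j, g (i+1) j = g i j + 1 ∧ ∀ j', j' ≠ j → g (i+1) j' = g i j')) →
    (∀ i, i ≤ n → numOpen Q (g i) ≤ p) →
    ∃ m, ∃ h : ℕ → Fin k → ℕ, (∀ i, i ≤ m → IsConfig Q (h i)) ∧ (∀ j, h 0 j = g 0 j) ∧
      (∀ j, h m j = (Q j).length) ∧
      (∀ i, i < m → ∃ j, h (i+1) j = h i j + 1 ∧ ∀ j', j' ≠ j → h (i+1) j' = h i j') ∧
      (∀ i, i ≤ m → numOpen Q (h i) ≤ p) := by
  intro n
  induction n with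
  | zero =>
    intro g hcfg hfin _ hbd
    exact ⟨0, g, hcfg, fun j => rfl, hfin, fun i hi => absurd hi (Nat.not_lt_zero i), hbd⟩
  | succ n ih =>
    intro g hcfg hfin hstep hbd
    obtain ⟨m, h, hcfg', h0', hfin', hstep', hbd'⟩ :=
      ih (fun i => g (i+1)) (fun i hi => hcfg (i+1) (by omega)) hfin
        (fun i hi => hstep (i+1) (by omega)) (fun i hi => hbd (i+1) (by omega))
    rcases hstep 0 (Nat.succ_pos n) with hlazy | ⟨j, hj, hj'⟩
    · exact ⟨m, h, hcfg', fun j => (h0' j).trans (hlazy j), hfin', hstep', hbd'⟩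
    · refine ⟨m + 1, fun i => if i = 0 then g 0 else h (i - 1), ?_, ?_, ?_, ?_, ?_⟩
      · intro i hi
        by_cases h0 : i = 0
        · simpa [h0] using hcfg 0 (by omega)
        · simpa [h0] using hcfg' (i - 1) (by omega)
      · intro j'; simp
      · intro j'; simpa using hfin' j'
      · intro i hi
        by_cases h0 : i = 0
        · subst h0
          refine ⟨j, ?_, ?_⟩
          · simpa [h0' j] using hj
          · intro j' hne; simpa [h0' j'] using hj' j' hne
        · obtain ⟨j2, hj2, hj2'⟩ := hstep' (i - 1) (by omega)
          refine ⟨j2, ?_, ?_⟩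
          · have : i + 1 - 1 = (i - 1) + 1 := by omega
            simp only [if_neg h0, if_neg (by omega : ¬ i + 1 = 0), this, hj2]
          · intro j' hne
            have : i + 1 - 1 = (i - 1) + 1 := by omega
            simp only [if_neg h0, if_neg (by omega : ¬ i + 1 = 0), this, hj2' j' hne]
      · intro i hi
        by_cases h0 : i = 0
        · simpa [h0] using hbd 0 (by omega)
        · simpa [h0] using hbd' (i - 1) (by omega)

section
variable {P : Type} {k : ℕ} (Q : Fin k → List P) (f : Fin k × Fin 3 → P)

lemma open_within (hnew : ∀ x : Fin k × Fin 3, ¬ occursIn Q (f x))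
    (c : Fin k → ℕ) (hc : ∀ j, c j ≤ (Q j).length) (t : P) :
    OpenPallet (fun i => Q i ++ [f (i, 0), f (i, 0), f (i, 1), f (i, 1), f (i, 2), f (i, 2)]) c t
      ↔ OpenPallet Q c t := by
  constructor
  · rintro ⟨⟨j, i, hi, ht⟩, ⟨l, i', hi', ht'⟩⟩
    simp only at ht ht'
    have hcj := hc j
    rw [List.getElem?_append_left (by omega : i < (Q j).length)] at ht
    constructor
    · exact ⟨j, i, hi, ht⟩
    · by_cases hlen : i' < (Q l).length
      · rw [List.getElem?_append_left hlen] at ht'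
        exact ⟨l, i', hi', ht'⟩
      · rw [List.getElem?_append_right (by omega)] at ht'
        obtain ⟨r, rfl, -, -⟩ := extras_get f l ht'
        exact absurd ⟨j, List.mem_of_getElem? ht⟩ (hnew (l, r))
  · rintro ⟨⟨j, i, hi, ht⟩, ⟨l, i', hi', ht'⟩⟩
    have h1 : i < (Q j).length := List.getElem?_eq_some_iff.mp ht |>.1
    have h2 : i' < (Q l).length := List.getElem?_eq_some_iff.mp ht' |>.1
    exact ⟨⟨j, i, hi, by simpa [List.getElem?_append_left h1] using ht⟩,
      ⟨l, i', hi', by simpa [List.getElem?_append_left h2] using ht'⟩⟩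

lemma open_clip (c : Fin k → ℕ) (t : P)
    (h : OpenPallet Q (fun j => min (c j) (Q j).length) t) :
    OpenPallet (fun i => Q i ++ [f (i, 0), f (i, 0), f (i, 1), f (i, 1), f (i, 2), f (i, 2)]) c t := by
  obtain ⟨⟨j, i, hi, ht⟩, ⟨l, i', hi', ht'⟩⟩ := h
  have h1 : i < (Q j).length := List.getElem?_eq_some_iff.mp ht |>.1
  have h2 : i' < (Q l).length := List.getElem?_eq_some_iff.mp ht' |>.1
  simp only [lt_min_iff] at hi
  refine ⟨⟨j, i, hi.1, by simpa [List.getElem?_append_left h1] using ht⟩,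
    ⟨l, i', ?_, by simpa [List.getElem?_append_left h2] using ht'⟩⟩
  simp only [min_le_iff] at hi'
  omega

lemma open_phase (hinj : Function.Injective f)
    (hnew : ∀ x : Fin k × Fin 3, ¬ occursIn Q (f x))
    (s : ℕ) (hs1 : 1 ≤ s) (hs2 : s ≤ 6 * k) (t : P)
    (h : OpenPallet (fun i => Q i ++ [f (i, 0), f (i, 0), f (i, 1), f (i, 1), f (i, 2), f (i, 2)])
      (fun j => (Q j).length + min 6 (s - 6 * (j : ℕ))) t) :
    t = f (⟨(s-1)/6, by omega⟩, ⟨(s-1) % 6 / 2, by omega⟩) := by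
  obtain ⟨⟨j, i, hi, ht⟩, ⟨l, i', hi', ht'⟩⟩ := h
  simp only at ht ht' hi hi'
  have h2 : ¬ i' < (Q l).length := by omega
  rw [List.getElem?_append_right (by omega)] at ht'
  obtain ⟨r, rfl, hr2, hr6⟩ := extras_get f l ht'
  have h1 : ¬ i < (Q j).length := by
    intro hlt
    rw [List.getElem?_append_left hlt] at ht
    exact hnew (l, r) ⟨j, List.mem_of_getElem? ht⟩
  rw [List.getElem?_append_right (by omega)] at ht
  obtain ⟨r', heq, hr2', hr6'⟩ := extras_get f j ht
  have hpair : (l, r) = (j, r') := hinj heq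
  have hjl : (l : ℕ) = (j : ℕ) := congrArg (fun x => ((x.1 : Fin k) : ℕ)) hpair
  have hrl : (r : ℕ) = (r' : ℕ) := congrArg (fun x => ((x.2 : Fin 3) : ℕ)) hpair
  have hjk : (l : ℕ) < k := l.isLt
  have hrv : (r : ℕ) < 3 := r.isLt
  refine congrArg f (Prod.ext (Fin.ext ?_) (Fin.ext ?_))
  · show (l : ℕ) = (s-1)/6
    omega
  · show (r : ℕ) = (s-1) % 6 / 2
    omega
end


/-- Appending to each sequence `q_i` six bins labeled `a_i, a_i, b_i, b_i, c_i, c_i`,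
where the `3k` new labels (given by the injective map `f`) are pairwise distinct and do
not occur in `Q`, does not change processability with at most `p` stack-up places. -/
theorem stmt10 {P : Type} {k : ℕ} (Q : Fin k → List P) (f : Fin k × Fin 3 → P)
    (hinj : Function.Injective f) (hnew : ∀ x : Fin k × Fin 3, ¬ occursIn Q (f x)) :
    ∀ p : ℕ, 1 ≤ p →
      (CanProcess Q p ↔
        CanProcess
          (fun i => Q i ++ [f (i, 0), f (i, 0), f (i, 1), f (i, 1), f (i, 2), f (i, 2)])
          p) := by
  intro p hp
  set Q' : Fin k → List P :=
    fun i => Q i ++ [f (i, 0), f (i, 0), f (i, 1), f (i, 1), f (i, 2), f (i, 2)] with hQ'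
  have hQ'len : ∀ j, (Q' j).length = (Q j).length + 6 := by
    intro j; simp [hQ']
  constructor
  · rintro ⟨n, g, ⟨hcfg, h0, hfin, hstep⟩, hbd⟩
    set F : ℕ → Fin k → ℕ :=
      fun i => if i ≤ n then g i else fun j => (Q j).length + min 6 ((i - n) - 6 * (j : ℕ))
      with hF
    have hFle : ∀ i, i ≤ n → F i = g i := by
      intro i hi; simp [hF, hi]
    have hFgt : ∀ i, n ≤ i →
        F i = fun j => (Q j).length + min 6 ((i - n) - 6 * (j : ℕ)) := by
      intro i hi
      by_cases hin : i ≤ n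
      · have : i = n := le_antisymm hin hi
        subst this
        funext j
        simp [hF, hfin j]
      · simp [hF, hin]
    refine ⟨n + 6 * k, F, ⟨?_, ?_, ?_, ?_⟩, ?_⟩
    · intro i hi j
      by_cases hin : i ≤ n
      · rw [hFle i hin]
        have := hcfg i hin j
        rw [hQ'len j]; omega
      · rw [hFgt i (by omega)]
        rw [hQ'len j]; beta_reduce; omega
    · intro j; rw [hFle 0 (Nat.zero_le n)]; exact h0 j
    · intro j
      have hjk : (j : ℕ) < k := j.isLt
      rw [hFgt (n + 6 * k) (by omega)]
      rw [hQ'len j]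
      have : n + 6 * k - n = 6 * k := by omega
      simp only [this]
      have : min 6 (6 * k - 6 * (j : ℕ)) = 6 := by omega
      omega
    · intro i hi
      by_cases hin : i + 1 ≤ n
      · obtain ⟨j, hj, hj'⟩ := hstep i (by omega)
        rw [hFle (i+1) hin, hFle i (by omega)]
        exact ⟨j, hj, hj'⟩
      · have hni : n ≤ i := by omega
        set s : ℕ := i - n with hs
        have hsk : s < 6 * k := by omega
        have hj0 : s / 6 < k := by omega
        refine ⟨⟨s / 6, hj0⟩, ?_, ?_⟩
        · rw [hFgt (i+1) (by omega), hFgt i (by omega)]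
          simp only []
          have h1 : i + 1 - n = s + 1 := by omega
          rw [h1]
          omega
        · intro j' hne
          rw [hFgt (i+1) (by omega), hFgt i (by omega)]
          simp only []
          have h1 : i + 1 - n = s + 1 := by omega
          rw [h1]
          have hne' : (j' : ℕ) ≠ s / 6 := fun h => hne (Fin.ext h)
          have := j'.isLt
          omega
    · intro i hi
      by_cases hin : i ≤ n
      · rw [hFle i hin]
        have hset : {t | OpenPallet Q' (g i) t} = {t | OpenPallet Q (g i) t} :=
          Set.ext (fun t => open_within Q f hnew (g i) (hcfg i hin) t)
        calc numOpen Q' (g i) = numOpen Q (g i) := by unfold numOpen; rw [hset]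
          _ ≤ p := hbd i hin
      · have hni : n ≤ i := by omega
        rw [hFgt i hni]
        set s : ℕ := i - n with hs
        have hs1 : 1 ≤ s := by omega
        have hs2 : s ≤ 6 * k := by omega
        have hsub : {t | OpenPallet Q'
            (fun j => (Q j).length + min 6 (s - 6 * (j : ℕ))) t} ⊆
            {f (⟨(s-1)/6, by omega⟩, ⟨(s-1) % 6 / 2, by omega⟩)} :=
          fun t ht => open_phase Q f hinj hnew s hs1 hs2 t ht
        calc numOpen Q' _ ≤ ({f (⟨(s-1)/6, by omega⟩, ⟨(s-1) % 6 / 2, by omega⟩)} : Set P).ncard :=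
              Set.ncard_le_ncard hsub (Set.finite_singleton _)
          _ = 1 := Set.ncard_singleton _
          _ ≤ p := hp
  · rintro ⟨n, g, ⟨hcfg, h0, hfin, hstep⟩, hbd⟩
    obtain ⟨m, h, hcfg', h0', hfin', hstep', hbd'⟩ :=
      compress Q p n (fun i j => min (g i j) (Q j).length)
        (fun i hi j => min_le_right _ _)
        (fun j => by
          show min (g n j) (Q j).length = (Q j).length
          have := hfin j; rw [hQ'len j] at this; omega)
        (by
          intro i hi
          obtain ⟨j, hj, hj'⟩ := hstep i hi
          by_cases hlt : g i j < (Q j).length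
          · right
            refine ⟨j, ?_, fun j' hne => ?_⟩
            · show min (g (i+1) j) (Q j).length = min (g i j) (Q j).length + 1
              rw [hj]; omega
            · show min (g (i+1) j') (Q j').length = min (g i j') (Q j').length
              rw [hj' j' hne]
          · left
            intro j'
            show min (g (i+1) j') (Q j').length = min (g i j') (Q j').length
            by_cases hje : j' = j
            · subst hje; rw [hj]; omega
            · rw [hj' j' hje])
        (by
          intro i hi
          calc numOpen Q (fun j => min (g i j) (Q j).length)
              ≤ numOpen Q' (g i) :=
                Set.ncard_le_ncard (fun t ht => open_clip Q f (g i) t ht)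
                  (openSet_finite Q' (g i))
            _ ≤ p := hbd i hi)
    refine ⟨m, h, ⟨hcfg', ?_, hfin', hstep'⟩, hbd'⟩
    intro j
    rw [h0' j, h0 j]
    simp
end

section
/- Let G = (V, A) be a digraph without loops in which every vertex is the tail or head of at least one arc, and let p ≥ 1 be an integer. Then G has directed pathwidth at most p − 1 if and only if the sequence system Q_G can be processed with at most p stack-up places. (This is the correctness of the reduction from directed pathwidth used to establish NP-hardness of the FIFO Stack-Up problem.) -/
/-- The sequence system `Q_G` of a digraph given by its arc list: for each arc one
sequence of two bins, labeled with the tail and the head of the arc. -/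
def seqSystem {V : Type} (arcs : List (V × V)) : Fin arcs.length → List V :=
  fun i => [(arcs.get i).1, (arcs.get i).2]

/-- A directed path-decomposition `(X_1, …, X_r)` of the digraph with vertex set `V`
and arc relation `A`. -/
def IsDPD {P : Type} (V : Set P) (A : P → P → Prop) (r : ℕ) (X : ℕ → Set P) : Prop :=
  (⋃ i ∈ Finset.Icc 1 r, X i) = V ∧
  (∀ u v, A u v → ∃ i j, 1 ≤ i ∧ i ≤ j ∧ j ≤ r ∧ u ∈ X i ∧ v ∈ X j) ∧
  (∀ i j l, 1 ≤ i → i < j → j < l → l ≤ r → X i ∩ X l ⊆ X j)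

/-- The directed pathwidth of the digraph `(V, A)` is at most `w`. -/
def dpwLE {P : Type} (V : Set P) (A : P → P → Prop) (w : ℤ) : Prop :=
  ∃ r X, IsDPD V A r X ∧ ∀ i, 1 ≤ i → i ≤ r → ((X i).ncard : ℤ) - 1 ≤ w

namespace Stmt14Aux

variable {V : Type} (arcs : List (V × V))

lemma seq_len (j : Fin arcs.length) : (seqSystem arcs j).length = 2 := rfl

lemma seq_getElem? (j : Fin arcs.length) (i : ℕ) (t : V) :
    (seqSystem arcs j)[i]? = some t ↔
      (i = 0 ∧ (arcs.get j).1 = t) ∨ (i = 1 ∧ (arcs.get j).2 = t) := by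
  match i with
  | 0 => simp [seqSystem]
  | 1 => simp [seqSystem]
  | (m+2) => simp [seqSystem]

lemma open_iff (c : Fin arcs.length → ℕ) (t : V) :
    OpenPallet (seqSystem arcs) c t ↔
      (∃ j, ((arcs.get j).1 = t ∧ 1 ≤ c j) ∨ ((arcs.get j).2 = t ∧ 2 ≤ c j)) ∧
      (∃ l, ((arcs.get l).1 = t ∧ c l = 0) ∨ ((arcs.get l).2 = t ∧ c l ≤ 1)) := by
  unfold OpenPallet
  constructor
  · rintro ⟨⟨j, i, hi, hsome⟩, ⟨l, i', hi', hsome'⟩⟩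
    rw [seq_getElem?] at hsome hsome'
    constructor
    · refine ⟨j, ?_⟩
      rcases hsome with ⟨rfl, h⟩ | ⟨rfl, h⟩
      · exact Or.inl ⟨h, by omega⟩
      · exact Or.inr ⟨h, by omega⟩
    · refine ⟨l, ?_⟩
      rcases hsome' with ⟨rfl, h⟩ | ⟨rfl, h⟩
      · exact Or.inl ⟨h, by omega⟩
      · exact Or.inr ⟨h, by omega⟩
  · rintro ⟨⟨j, hj⟩, ⟨l, hl⟩⟩
    constructor
    · rcases hj with ⟨h, hc⟩ | ⟨h, hc⟩
      · exact ⟨j, 0, by omega, (seq_getElem? arcs j 0 t).2 (Or.inl ⟨rfl, h⟩)⟩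
      · exact ⟨j, 1, by omega, (seq_getElem? arcs j 1 t).2 (Or.inr ⟨rfl, h⟩)⟩
    · rcases hl with ⟨h, hc⟩ | ⟨h, hc⟩
      · exact ⟨l, 0, by omega, (seq_getElem? arcs l 0 t).2 (Or.inl ⟨rfl, h⟩)⟩
      · exact ⟨l, 1, by omega, (seq_getElem? arcs l 1 t).2 (Or.inr ⟨rfl, h⟩)⟩

lemma finiteV (hcover : ∀ v : V, ∃ a ∈ arcs, v = a.1 ∨ v = a.2) : Finite V := by
  have hsurj : Function.Surjective
      (fun x : Fin arcs.length × Bool =>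
        if x.2 then (arcs.get x.1).2 else (arcs.get x.1).1) := by
    intro v
    obtain ⟨a, ha, hv⟩ := hcover v
    obtain ⟨j, hj⟩ := List.mem_iff_get.mp ha
    rcases hv with h | h
    · exact ⟨(j, false), by simp [← List.get_eq_getElem, hj, ← h]⟩
    · exact ⟨(j, true), by simp [← List.get_eq_getElem, hj, ← h]⟩
  exact Finite.of_surjective _ hsurj

end Stmt14Aux
namespace Stmt14Aux

variable {V : Type}

lemma forward (arcs : List (V × V))
    (hcover : ∀ v : V, ∃ a ∈ arcs, v = a.1 ∨ v = a.2) {p : ℕ} (hp : 1 ≤ p)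
    (h : dpwLE (Set.univ : Set V) (fun u v => (u, v) ∈ arcs) ((p : ℤ) - 1)) :
    CanProcess (seqSystem arcs) p := by
  classical
  have hfin : Finite V := finiteV arcs hcover
  obtain ⟨r, X, ⟨hU, hA, hC⟩, hW⟩ := h
  set k := arcs.length with hk
  have hbag : ∀ t : V, ∃ i, i ∈ Finset.Icc 1 r ∧ t ∈ X i := by
    intro t
    have ht : t ∈ (⋃ i ∈ Finset.Icc 1 r, X i) := by rw [hU]; trivial
    simpa using ht
  set Bag : V → Finset ℕ := fun t => (Finset.Icc 1 r).filter (fun i => t ∈ X i) with hBag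
  have hBagne : ∀ t, (Bag t).Nonempty := by
    intro t
    obtain ⟨i, hi, hx⟩ := hbag t
    exact ⟨i, Finset.mem_filter.mpr ⟨hi, hx⟩⟩
  set fst : V → ℕ := fun t => (Bag t).min' (hBagne t) with hfst
  set lst : V → ℕ := fun t => (Bag t).max' (hBagne t) with hlst
  have hfst_mem : ∀ t, fst t ∈ Finset.Icc 1 r ∧ t ∈ X (fst t) := fun t =>
    Finset.mem_filter.mp ((Bag t).min'_mem (hBagne t))
  have hlst_mem : ∀ t, lst t ∈ Finset.Icc 1 r ∧ t ∈ X (lst t) := fun t =>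
    Finset.mem_filter.mp ((Bag t).max'_mem (hBagne t))
  have hfl : ∀ t, fst t ≤ lst t := fun t =>
    Finset.min'_le _ _ ((Bag t).max'_mem (hBagne t))
  have hconv : ∀ t s, fst t ≤ s → s ≤ lst t → t ∈ X s := by
    intro t s h1 h2
    rcases eq_or_lt_of_le h1 with he | h1
    · rw [← he]; exact (hfst_mem t).2
    rcases eq_or_lt_of_le h2 with he | h2
    · rw [he]; exact (hlst_mem t).2
    · exact hC (fst t) s (lst t) ((Finset.mem_Icc.mp (hfst_mem t).1).1) h1 h2
        ((Finset.mem_Icc.mp (hlst_mem t).1).2) ⟨(hfst_mem t).2, (hlst_mem t).2⟩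
  have harc : ∀ a : Fin k, fst (arcs.get a).1 ≤ lst (arcs.get a).2 := by
    intro a
    have hmem : ((arcs.get a).1, (arcs.get a).2) ∈ arcs := by
      have := List.get_mem arcs a
      simpa using this
    obtain ⟨i, j, h1, h2, h3, hu, hv⟩ := hA _ _ hmem
    calc fst (arcs.get a).1 ≤ i :=
          Finset.min'_le _ i (Finset.mem_filter.mpr ⟨Finset.mem_Icc.mpr ⟨h1, le_trans h2 h3⟩, hu⟩)
      _ ≤ j := h2
      _ ≤ lst (arcs.get a).2 :=
          Finset.le_max' _ j (Finset.mem_filter.mpr ⟨Finset.mem_Icc.mpr ⟨le_trans h1 h2, h3⟩, hv⟩)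
  -- the sorted list of bins
  set κ : Fin k × Bool → ℕ :=
    fun b => if b.2 then 2 * lst (arcs.get b.1).2 + 1 else 2 * fst (arcs.get b.1).1 with hκ
  have hκf : ∀ a : Fin k, κ (a, false) = 2 * fst (arcs.get a).1 := fun a => rfl
  have hκt : ∀ a : Fin k, κ (a, true) = 2 * lst (arcs.get a).2 + 1 := fun a => rfl
  set rel : Fin k × Bool → Fin k × Bool → Prop := fun x y => κ x ≤ κ y with hrel
  haveI : DecidableRel rel := fun x y => Nat.decLe _ _
  haveI : IsTotal (Fin k × Bool) rel := ⟨fun x y => Nat.le_total _ _⟩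
  haveI : IsTrans (Fin k × Bool) rel := ⟨fun x y z => Nat.le_trans⟩
  set L : List (Fin k × Bool) := List.insertionSort rel ((List.finRange k) ×ˢ [false, true])
    with hL
  have hperm : L.Perm ((List.finRange k) ×ˢ [false, true]) := List.perm_insertionSort rel _
  have hsort : L.Pairwise rel := List.pairwise_insertionSort rel _
  have hmemL : ∀ b : Fin k × Bool, b ∈ L := by
    intro b
    rw [hperm.mem_iff]
    rcases b with ⟨a, _ | _⟩ <;> simp [List.mem_product]
  have hnodupL : L.Nodup :=
    hperm.nodup_iff.mpr (List.Nodup.product (List.nodup_finRange k) (by simp))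
  set n := L.length with hn
  set e : Fin L.length ≃ (Fin k × Bool) :=
    List.Nodup.getEquivOfForallMemList L hnodupL hmemL with he
  have heapp : ∀ i : Fin L.length, e i = L.get i := fun i => rfl
  set ι : Fin k × Bool → ℕ := fun b => (e.symm b : ℕ) with hι
  have hι_lt : ∀ b, ι b < n := fun b => (e.symm b).2
  have hget : ∀ b, L.get ⟨ι b, hι_lt b⟩ = b := by
    intro b
    have h1 : (⟨ι b, hι_lt b⟩ : Fin L.length) = e.symm b := rfl
    rw [h1, ← heapp]
    exact e.apply_symm_apply b
  have hι_inj : ∀ b b', ι b = ι b' → b = b' := by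
    intro b b' hee
    have h1 := hget b
    have h2 := hget b'
    rw [← h1, ← h2]
    congr 1
    exact Fin.ext hee
  have hsorted : ∀ (i j : Fin L.length), i < j → κ (L.get i) ≤ κ (L.get j) := by
    intro i j hij
    exact hsort.rel_get_of_lt hij
  have hidx : ∀ (i : Fin L.length), ι (L.get i) = i := by
    intro i
    have : e.symm (L.get i) = i := by rw [← heapp]; exact e.symm_apply_apply i
    simp only [hι, this]
  have hfb : ∀ a : Fin k, ι (a, false) < ι (a, true) := by
    intro a
    rcases lt_trichotomy (ι (a, false)) (ι (a, true)) with hlt | he | hgt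
    · exact hlt
    · exact absurd (hι_inj _ _ he) (by simp)
    · exfalso
      have hs := hsorted ⟨ι (a, true), hι_lt _⟩ ⟨ι (a, false), hι_lt _⟩ hgt
      rw [hget, hget, hκf, hκt] at hs
      have := harc a
      omega
  -- the processing
  set f : ℕ → Fin k → ℕ :=
    fun i a => (if ι (a, false) < i then 1 else 0) + (if ι (a, true) < i then 1 else 0) with hf
  have hf0 : ∀ a, f 0 a = 0 := by intro a; simp [hf]
  have hfn : ∀ a, f n a = 2 := by
    intro a
    have h1 := hι_lt (a, false)
    have h2 := hι_lt (a, true)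
    simp only [hf, if_pos h1, if_pos h2]
  have hcfg : ∀ i, i ≤ n → IsConfig (seqSystem arcs) (f i) := by
    intro i _ j
    rw [seq_len]
    simp only [hf]
    split <;> split <;> omega
  have hstep : ∀ i, i < n →
      ∃ j, f (i + 1) j = f i j + 1 ∧ ∀ j', j' ≠ j → f (i + 1) j' = f i j' := by
    intro i hi
    set b0 := L.get ⟨i, hi⟩ with hb0
    have hιb0 : ι b0 = i := hidx ⟨i, hi⟩
    refine ⟨b0.1, ?_, ?_⟩
    · have hown : (b0.1, b0.2) = b0 := rfl
      rcases hx : b0.2 with _ | _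
      · -- tail bin removed
        have he0 : ι (b0.1, false) = i := by rw [show (b0.1, false) = b0 by rw [← hx]]; exact hιb0
        have hne1 : ι (b0.1, true) ≠ i := by
          intro hcon
          have : (b0.1, true) = b0 := by rw [← hιb0] at hcon; exact hι_inj _ _ hcon
          rw [← this] at hx; simp at hx
        simp only [hf]
        split_ifs <;> omega
      · have he0 : ι (b0.1, true) = i := by rw [show (b0.1, true) = b0 by rw [← hx]]; exact hιb0
        have hne1 : ι (b0.1, false) ≠ i := by
          intro hcon
          have : (b0.1, false) = b0 := by rw [← hιb0] at hcon; exact hι_inj _ _ hcon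
          rw [← this] at hx; simp at hx
        simp only [hf]
        split_ifs <;> omega
    · intro j' hj'
      have hne1 : ι (j', false) ≠ i := by
        intro hcon
        have : (j', false) = b0 := by rw [← hιb0] at hcon; exact hι_inj _ _ hcon
        exact hj' (by rw [← this])
      have hne2 : ι (j', true) ≠ i := by
        intro hcon
        have : (j', true) = b0 := by rw [← hιb0] at hcon; exact hι_inj _ _ hcon
        exact hj' (by rw [← this])
      simp only [hf]
      split_ifs <;> omega
  refine ⟨n, f, ⟨hcfg, hf0, fun j => by rw [seq_len]; exact hfn j, hstep⟩, ?_⟩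
  -- the bound
  intro i hi
  rcases eq_or_lt_of_le hi with rfl | hi
  · -- final configuration: nothing open
    have hempty : {t | OpenPallet (seqSystem arcs) (f n) t} = ∅ := by
      ext t
      simp only [Set.mem_setOf_eq, Set.mem_empty_iff_false, iff_false]
      rintro ⟨-, ⟨l, i', hle, hsome⟩⟩
      rw [seq_getElem?] at hsome
      have h2 := hfn l
      omega
    rw [numOpen, hempty]
    simp
  · -- intermediate configuration
    set b0 := L.get ⟨i, hi⟩ with hb0
    set s : ℕ := if b0.2 then lst (arcs.get b0.1).2 else fst (arcs.get b0.1).1 with hs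
    have hκb0 : 2 * s ≤ κ b0 ∧ κ b0 ≤ 2 * s + 1 := by
      rcases hx : b0.2 with _ | _ <;> simp [hs, hκ, hx] <;> omega
    have hsmem : s ∈ Finset.Icc 1 r := by
      rcases hx : b0.2 with _ | _
      · rw [hs, hx]; simp only [if_neg (by simp : ¬(false = true))]
        exact (hfst_mem _).1
      · rw [hs, hx]; simp only [if_pos rfl]
        exact (hlst_mem _).1
    have hιb0 : ι b0 = i := hidx ⟨i, hi⟩
    -- κ comparisons with removed/remaining bins
    have hbelow : ∀ b, ι b < i → κ b ≤ κ b0 := by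
      intro b hb
      have := hsorted ⟨ι b, hι_lt b⟩ ⟨i, hi⟩ hb
      rwa [hget] at this
    have habove : ∀ b, i ≤ ι b → κ b0 ≤ κ b := by
      intro b hb
      rcases eq_or_lt_of_le hb with he | hlt
      · have : b = b0 := by rw [← hιb0] at he; exact (hι_inj _ _ he.symm)
        rw [this]
      · have := hsorted ⟨i, hi⟩ ⟨ι b, hι_lt b⟩ hlt
        rwa [hget] at this
    have hsub : {t | OpenPallet (seqSystem arcs) (f i) t} ⊆ X s := by
      intro t ht
      simp only [Set.mem_setOf_eq] at ht
      rw [open_iff] at ht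
      obtain ⟨⟨j, hj⟩, ⟨l, hl⟩⟩ := ht
      have hA1 : fst t ≤ s := by
        rcases hj with ⟨hu, hc⟩ | ⟨hv, hc⟩
        · have h1 : ι (j, false) < i := by
            simp only [hf] at hc
            have := hfb j
            split_ifs at hc <;> omega
          have := hbelow _ h1
          rw [hκf, hu] at this
          omega
        · have h1 : ι (j, true) < i := by
            simp only [hf] at hc
            split_ifs at hc <;> omega
          have := hbelow _ h1
          rw [hκt, hv] at this
          have := hfl t
          omega
      have hB1 : s ≤ lst t := by
        rcases hl with ⟨hu, hc⟩ | ⟨hv, hc⟩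
        · have h1 : i ≤ ι (l, false) := by
            simp only [hf] at hc
            split_ifs at hc <;> omega
          have := habove _ h1
          rw [hκf, hu] at this
          have := hfl t
          omega
        · have h1 : i ≤ ι (l, true) := by
            simp only [hf] at hc
            have := hfb l
            split_ifs at hc <;> omega
          have := habove _ h1
          rw [hκt, hv] at this
          omega
      exact hconv t s hA1 hB1
    have hXcard : (X s).ncard ≤ p := by
      have hw := hW s (Finset.mem_Icc.mp hsmem).1 (Finset.mem_Icc.mp hsmem).2
      omega
    calc numOpen (seqSystem arcs) (f i) ≤ (X s).ncard :=
          Set.ncard_le_ncard hsub (Set.toFinite _)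
      _ ≤ p := hXcard

end Stmt14Aux
namespace Stmt14Aux

variable {V : Type}

lemma backward (arcs : List (V × V))
    (hcover : ∀ v : V, ∃ a ∈ arcs, v = a.1 ∨ v = a.2) {p : ℕ} (hp : 1 ≤ p)
    (h : CanProcess (seqSystem arcs) p) :
    dpwLE (Set.univ : Set V) (fun u v => (u, v) ∈ arcs) ((p : ℤ) - 1) := by
  classical
  have hfin : Finite V := finiteV arcs hcover
  obtain ⟨n, f, ⟨hcfg, h0, hN, hstep⟩, hbound⟩ := h
  have hlen : ∀ a : Fin arcs.length, f n a = 2 := by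
    intro a
    rw [hN a, seq_len]
  have hmono1 : ∀ i, i < n → ∀ a : Fin arcs.length, f i a ≤ f (i+1) a ∧ f (i+1) a ≤ f i a + 1 := by
    intro i hi a
    obtain ⟨j, hj1, hj2⟩ := hstep i hi
    by_cases ha : a = j
    · subst ha; omega
    · rw [hj2 a ha]; omega
  have hmono : ∀ (a : Fin arcs.length) i j, i ≤ j → j ≤ n → f i a ≤ f j a := by
    intro a i j hij hjn
    induction hij with
    | refl => exact le_refl _
    | @step m hm ih =>
      have h1 := hmono1 m (by omega) a
      have h2 := ih (by omega)
      simp only [Nat.succ_eq_add_one]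
      omega
  have ex0 : ∀ a : Fin arcs.length, ∃ i, i ≤ n ∧ 1 ≤ f i a := fun a => ⟨n, le_refl n, by rw [hlen]; omega⟩
  have ex1 : ∀ a : Fin arcs.length, ∃ i, i ≤ n ∧ 2 ≤ f i a := fun a => ⟨n, le_refl n, by rw [hlen]⟩
  set s0 : Fin arcs.length → ℕ := fun a => Nat.find (ex0 a) with hs0def
  set s1 : Fin arcs.length → ℕ := fun a => Nat.find (ex1 a) with hs1def
  have hfind0 : ∀ a, Nat.find (ex0 a) = s0 a := fun a => rfl
  have hfind1 : ∀ a, Nat.find (ex1 a) = s1 a := fun a => rfl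
  have hs0 : ∀ a, s0 a ≤ n ∧ 1 ≤ f (s0 a) a := fun a => Nat.find_spec (ex0 a)
  have hs1 : ∀ a, s1 a ≤ n ∧ 2 ≤ f (s1 a) a := fun a => Nat.find_spec (ex1 a)
  have hc1 : ∀ (a : Fin arcs.length) m, m ≤ n → (1 ≤ f m a ↔ s0 a ≤ m) := by
    intro a m hm
    constructor
    · intro hh; exact Nat.find_le ⟨hm, hh⟩
    · intro hh; exact le_trans (hs0 a).2 (hmono a _ m hh hm)
  have hc2 : ∀ (a : Fin arcs.length) m, m ≤ n → (2 ≤ f m a ↔ s1 a ≤ m) := by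
    intro a m hm
    constructor
    · intro hh; exact Nat.find_le ⟨hm, hh⟩
    · intro hh; exact le_trans (hs1 a).2 (hmono a _ m hh hm)
  have hs0pos : ∀ a, 1 ≤ s0 a := by
    intro a
    rcases Nat.eq_zero_or_pos (s0 a) with hz | hpos
    · exfalso
      have := (hs0 a).2
      rw [hz, h0 a] at this
      omega
    · exact hpos
  have hs01 : ∀ a, s0 a < s1 a := by
    intro a
    have h1 := hs1 a
    have h1' := hs0 a
    have hle : s0 a ≤ s1 a := (hc1 a (s1 a) h1.1).1 (by omega)
    have hpos := hs0pos a
    have hmin : ¬(s0 a - 1 ≤ n ∧ 1 ≤ f (s0 a - 1) a) := Nat.find_min (ex0 a) (by rw [hfind0]; omega)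
    have hz : f (s0 a - 1) a = 0 := by
      rcases Nat.lt_or_ge (f (s0 a - 1) a) 1 with hlt | hge
      · omega
      · exact absurd ⟨by omega, hge⟩ hmin
    have hstep' := hmono1 (s0 a - 1) (by omega) a
    have hrw : s0 a - 1 + 1 = s0 a := by omega
    rw [hrw] at hstep'
    rcases eq_or_lt_of_le hle with he | hlt
    · exfalso
      rw [← he] at h1
      omega
    · exact hlt
  have hs1pos : ∀ a, 1 ≤ s1 a := fun a => by have := hs01 a; omega
  -- first/last step facts
  have hval0 : ∀ (a : Fin arcs.length) m, 1 ≤ m → m ≤ n → s0 a = m → f (m-1) a = 0 ∧ 1 ≤ f m a := by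
    intro a m h1 h2 hsa
    constructor
    · have := (hc1 a (m-1) (by omega))
      rcases Nat.lt_or_ge (f (m-1) a) 1 with hlt | hge
      · omega
      · exfalso; have := this.1 hge; omega
    · exact (hc1 a m h2).2 (by omega)
  have hval1 : ∀ (a : Fin arcs.length) m, 1 ≤ m → m ≤ n → s1 a = m → f (m-1) a ≤ 1 ∧ 2 ≤ f m a := by
    intro a m h1 h2 hsa
    constructor
    · have := (hc2 a (m-1) (by omega))
      rcases Nat.lt_or_ge (f (m-1) a) 2 with hlt | hge
      · omega
      · exfalso; have := this.1 hge; omega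
    · exact (hc2 a m h2).2 (by omega)
  have hchg : ∀ m, 1 ≤ m → m ≤ n → ∀ (a b : Fin arcs.length),
      f (m-1) a ≠ f m a → f (m-1) b ≠ f m b → a = b := by
    intro m h1 h2 a b ha hb
    obtain ⟨j, hj1, hj2⟩ := hstep (m-1) (by omega)
    have hrw : m - 1 + 1 = m := by omega
    rw [hrw] at hj1 hj2
    have haj : a = j := by
      by_contra haj
      exact ha (hj2 a haj).symm
    have hbj : b = j := by
      by_contra hbj
      exact hb (hj2 b hbj).symm
    rw [haj, hbj]
  have hkey01 : ∀ m (a b : Fin arcs.length), s0 a = m → s1 b = m → False := by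
    intro m a b ha hb
    have hm1 : 1 ≤ m := by have := hs0pos a; omega
    have hm2 : m ≤ n := by have := (hs0 a).1; omega
    have hva := hval0 a m hm1 hm2 ha
    have hvb := hval1 b m hm1 hm2 hb
    have hab : a = b := hchg m hm1 hm2 a b (by omega) (by omega)
    subst hab
    have := hs01 a
    omega
  have hkey00 : ∀ m (a b : Fin arcs.length), s0 a = m → s0 b = m → a = b := by
    intro m a b ha hb
    have hm1 : 1 ≤ m := by have := hs0pos a; omega
    have hm2 : m ≤ n := by have := (hs0 a).1; omega
    have hva := hval0 a m hm1 hm2 ha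
    have hvb := hval0 b m hm1 hm2 hb
    exact hchg m hm1 hm2 a b (by omega) (by omega)
  have hkey11 : ∀ m (a b : Fin arcs.length), s1 a = m → s1 b = m → a = b := by
    intro m a b ha hb
    have hm1 : 1 ≤ m := by have := hs1pos a; omega
    have hm2 : m ≤ n := by have := (hs1 a).1; omega
    have hva := hval1 a m hm1 hm2 ha
    have hvb := hval1 b m hm1 hm2 hb
    exact hchg m hm1 hm2 a b (by omega) (by omega)
  -- the steps at which bins of pallet t are removed
  set T : V → Finset ℕ := fun t => (Finset.Icc 1 n).filter
    (fun m => ∃ a : Fin arcs.length, ((arcs.get a).1 = t ∧ s0 a = m) ∨ ((arcs.get a).2 = t ∧ s1 a = m))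
    with hT
  have hTmem : ∀ t m, m ∈ T t ↔
      ∃ a : Fin arcs.length, ((arcs.get a).1 = t ∧ s0 a = m) ∨ ((arcs.get a).2 = t ∧ s1 a = m) := by
    intro t m
    rw [hT]
    simp only [Finset.mem_filter, Finset.mem_Icc]
    constructor
    · exact fun hh => hh.2
    · intro hh
      refine ⟨?_, hh⟩
      obtain ⟨a, ha⟩ := hh
      rcases ha with ⟨-, hsa⟩ | ⟨-, hsa⟩
      · exact ⟨by have := hs0pos a; omega, by have := (hs0 a).1; omega⟩
      · exact ⟨by have := hs1pos a; omega, by have := (hs1 a).1; omega⟩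
  have hTne : ∀ t, (T t).Nonempty := by
    intro t
    obtain ⟨a, ha, hv⟩ := hcover t
    obtain ⟨j, hj⟩ := List.mem_iff_get.mp ha
    rcases hv with hh | hh
    · exact ⟨s0 j, (hTmem t _).2 ⟨j, Or.inl ⟨by rw [hj, ← hh], rfl⟩⟩⟩
    · exact ⟨s1 j, (hTmem t _).2 ⟨j, Or.inr ⟨by rw [hj, ← hh], rfl⟩⟩⟩
  set α : V → ℕ := fun t => (T t).min' (hTne t) with hα
  set β : V → ℕ := fun t => (T t).max' (hTne t) with hβ
  have hαmem : ∀ t, α t ∈ T t := fun t => (T t).min'_mem (hTne t)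
  have hβmem : ∀ t, β t ∈ T t := fun t => (T t).max'_mem (hTne t)
  have hαle : ∀ t m, m ∈ T t → α t ≤ m := fun t m hm => (T t).min'_le m hm
  have hβge : ∀ t m, m ∈ T t → m ≤ β t := fun t m hm => (T t).le_max' m hm
  have hαβ : ∀ t, α t ≤ β t := fun t => hαle t _ (hβmem t)
  have hTIcc : ∀ t m, m ∈ T t → 1 ≤ m ∧ m ≤ n := by
    intro t m hm
    rw [hT] at hm
    have := (Finset.mem_filter.mp hm).1
    exact Finset.mem_Icc.mp this
  have hα1 : ∀ t, 1 ≤ α t := fun t => (hTIcc t _ (hαmem t)).1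
  have hβn : ∀ t, β t ≤ n := fun t => (hTIcc t _ (hβmem t)).2
  -- labels at a step are unique
  have hlab : ∀ m (t t' : V), m ∈ T t → m ∈ T t' → t = t' := by
    intro m t t' ht ht'
    rw [hTmem] at ht ht'
    obtain ⟨a, ha⟩ := ht
    obtain ⟨b, hb⟩ := ht'
    rcases ha with ⟨hu, hsa⟩ | ⟨hv, hsa⟩ <;> rcases hb with ⟨hu', hsb⟩ | ⟨hv', hsb⟩
    · have : a = b := hkey00 m a b hsa hsb
      rw [← hu, ← hu', this]
    · exact (hkey01 m a b hsa hsb).elim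
    · exact (hkey01 m b a hsb hsa).elim
    · have : a = b := hkey11 m a b hsa hsb
      rw [← hv, ← hv', this]
  -- characterization of open pallets
  have hopen : ∀ m, m ≤ n → ∀ t, OpenPallet (seqSystem arcs) (f m) t ↔ (α t ≤ m ∧ m < β t) := by
    intro m hm t
    rw [open_iff]
    constructor
    · rintro ⟨⟨j, hj⟩, ⟨l, hl⟩⟩
      constructor
      · rcases hj with ⟨hu, hf⟩ | ⟨hv, hf⟩
        · have hsm : s0 j ≤ m := (hc1 j m hm).1 hf
          have := hαle t _ ((hTmem t _).2 ⟨j, Or.inl ⟨hu, rfl⟩⟩)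
          omega
        · have hsm : s1 j ≤ m := (hc2 j m hm).1 hf
          have := hαle t _ ((hTmem t _).2 ⟨j, Or.inr ⟨hv, rfl⟩⟩)
          omega
      · rcases hl with ⟨hu, hf⟩ | ⟨hv, hf⟩
        · have hsm : ¬ (s0 l ≤ m) := by rw [← hc1 l m hm]; omega
          have := hβge t _ ((hTmem t _).2 ⟨l, Or.inl ⟨hu, rfl⟩⟩)
          omega
        · have hsm : ¬ (s1 l ≤ m) := by rw [← hc2 l m hm]; omega
          have := hβge t _ ((hTmem t _).2 ⟨l, Or.inr ⟨hv, rfl⟩⟩)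
          omega
    · rintro ⟨h1, h2⟩
      constructor
      · obtain ⟨a, ha⟩ := (hTmem t _).1 (hαmem t)
        rcases ha with ⟨hu, hsa⟩ | ⟨hv, hsa⟩
        · exact ⟨a, Or.inl ⟨hu, (hc1 a m hm).2 (by omega)⟩⟩
        · refine ⟨a, Or.inr ⟨hv, (hc2 a m hm).2 (by omega)⟩⟩
      · obtain ⟨a, ha⟩ := (hTmem t _).1 (hβmem t)
        rcases ha with ⟨hu, hsa⟩ | ⟨hv, hsa⟩
        · refine ⟨a, Or.inl ⟨hu, ?_⟩⟩
          have := (hc1 a m hm)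
          rcases Nat.lt_or_ge (f m a) 1 with hlt | hge
          · omega
          · exfalso; have := this.1 hge; omega
        · refine ⟨a, Or.inr ⟨hv, ?_⟩⟩
          have := (hc2 a m hm)
          rcases Nat.lt_or_ge (f m a) 2 with hlt | hge
          · omega
          · exfalso; have := this.1 hge; omega
  -- the decomposition
  set X : ℕ → Set V := fun i =>
    if i ≤ n then {t | α t = β t ∧ ∃ a : Fin arcs.length, (arcs.get a).1 = t ∧ s0 a = i}
    else if i ≤ 2 * n then {t | α t < β t ∧ α t ≤ i - n ∧ i - n ≤ β t}
    else {t | α t = β t ∧ ∃ a : Fin arcs.length, (arcs.get a).2 = t ∧ s1 a = i - 2 * n} with hX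
  have hXfront : ∀ i, i ≤ n → ∀ t, (t ∈ X i ↔
      (α t = β t ∧ ∃ a : Fin arcs.length, (arcs.get a).1 = t ∧ s0 a = i)) := by
    intro i hi t
    rw [hX]
    simp only [if_pos hi]
    rfl
  have hXmid : ∀ i, n < i → i ≤ 2 * n → ∀ t, (t ∈ X i ↔
      (α t < β t ∧ α t ≤ i - n ∧ i - n ≤ β t)) := by
    intro i hi1 hi2 t
    rw [hX]
    simp only [if_neg (by omega : ¬ i ≤ n), if_pos hi2]
    rfl
  have hXback : ∀ i, 2 * n < i → ∀ t, (t ∈ X i ↔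
      (α t = β t ∧ ∃ a : Fin arcs.length, (arcs.get a).2 = t ∧ s1 a = i - 2 * n)) := by
    intro i hi t
    rw [hX]
    simp only [if_neg (by omega : ¬ i ≤ n), if_neg (by omega : ¬ i ≤ 2 * n)]
    rfl
  refine ⟨3 * n, X, ⟨?_, ?_, ?_⟩, ?_⟩
  · -- union
    apply Set.eq_univ_of_forall
    intro t
    simp only [Set.mem_iUnion]
    rcases eq_or_lt_of_le (hαβ t) with he | hlt
    · obtain ⟨a, ha⟩ := (hTmem t _).1 (hαmem t)
      rcases ha with ⟨hu, hsa⟩ | ⟨hv, hsa⟩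
      · refine ⟨α t, ?_, ?_⟩
        · exact Finset.mem_Icc.mpr ⟨hα1 t, by have := hβn t; omega⟩
        · rw [hXfront (α t) (by have := hβn t; omega)]
          exact ⟨he, a, hu, hsa⟩
      · refine ⟨2 * n + α t, ?_, ?_⟩
        · exact Finset.mem_Icc.mpr ⟨by have := hα1 t; omega, by have := hβn t; omega⟩
        · rw [hXback (2 * n + α t) (by have := hα1 t; omega)]
          exact ⟨he, a, hv, by omega⟩
    · refine ⟨n + α t, ?_, ?_⟩
      · exact Finset.mem_Icc.mpr ⟨by have := hα1 t; omega, by have := hβn t; omega⟩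
      · rw [hXmid (n + α t) (by have := hα1 t; omega) (by have := hβn t; have := hαβ t; omega)]
        exact ⟨hlt, by omega, by omega⟩
  · -- arcs
    intro u0 v0 hmem
    obtain ⟨a, ha⟩ := List.mem_iff_get.mp hmem
    have hu : (arcs.get a).1 = u0 := by rw [ha]
    have hv : (arcs.get a).2 = v0 := by rw [ha]
    have hm0a : s0 a ∈ T u0 := (hTmem u0 _).2 ⟨a, Or.inl ⟨hu, rfl⟩⟩
    have hm1a : s1 a ∈ T v0 := (hTmem v0 _).2 ⟨a, Or.inr ⟨hv, rfl⟩⟩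
    have h01 := hs01 a
    have h0p := hs0pos a
    have h1n := (hs1 a).1
    have hαu := hαle u0 _ hm0a
    have hβu := hβge u0 _ hm0a
    have hαv := hαle v0 _ hm1a
    have hβv := hβge v0 _ hm1a
    by_cases hsu : α u0 = β u0 <;> by_cases hsv : α v0 = β v0
    · refine ⟨s0 a, 2 * n + s1 a, by omega, by omega, by omega, ?_, ?_⟩
      · rw [hXfront (s0 a) (by omega)]; exact ⟨hsu, a, hu, rfl⟩
      · rw [hXback (2 * n + s1 a) (by omega)]; exact ⟨hsv, a, hv, by omega⟩
    · refine ⟨s0 a, n + s1 a, by omega, by omega, by omega, ?_, ?_⟩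
      · rw [hXfront (s0 a) (by omega)]; exact ⟨hsu, a, hu, rfl⟩
      · rw [hXmid (n + s1 a) (by omega) (by omega)]
        exact ⟨lt_of_le_of_ne (hαβ v0) hsv, by omega, by omega⟩
    · refine ⟨n + s0 a, 2 * n + s1 a, by omega, by omega, by omega, ?_, ?_⟩
      · rw [hXmid (n + s0 a) (by omega) (by omega)]
        exact ⟨lt_of_le_of_ne (hαβ u0) hsu, by omega, by omega⟩
      · rw [hXback (2 * n + s1 a) (by omega)]; exact ⟨hsv, a, hv, by omega⟩
    · refine ⟨n + s0 a, n + s1 a, by omega, by omega, by omega, ?_, ?_⟩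
      · rw [hXmid (n + s0 a) (by omega) (by omega)]
        exact ⟨lt_of_le_of_ne (hαβ u0) hsu, by omega, by omega⟩
      · rw [hXmid (n + s1 a) (by omega) (by omega)]
        exact ⟨lt_of_le_of_ne (hαβ v0) hsv, by omega, by omega⟩
  · -- convexity
    intro i j l h1i hij hjl hl3n t ht
    obtain ⟨hti, htl⟩ := ht
    by_cases hin : i ≤ n
    · exfalso
      rw [hXfront i hin] at hti
      obtain ⟨hαβt, a, hu, hsa⟩ := hti
      have hiT : i ∈ T t := (hTmem t _).2 ⟨a, Or.inl ⟨hu, hsa⟩⟩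
      have hαi : α t = i := by
        have := hαle t _ hiT
        have := hβge t _ hiT
        omega
      by_cases hln : l ≤ n
      · rw [hXfront l hln] at htl
        obtain ⟨-, b, hu', hsb⟩ := htl
        have hlT : l ∈ T t := (hTmem t _).2 ⟨b, Or.inl ⟨hu', hsb⟩⟩
        have := hαle t _ hlT
        have := hβge t _ hlT
        omega
      · by_cases hl2n : l ≤ 2 * n
        · rw [hXmid l (by omega) hl2n] at htl
          omega
        · rw [hXback l (by omega)] at htl
          obtain ⟨-, b, hv', hsb⟩ := htl
          have hlT : l - 2 * n ∈ T t := (hTmem t _).2 ⟨b, Or.inr ⟨hv', hsb⟩⟩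
          have h1 := hαle t _ hlT
          have h2 := hβge t _ hlT
          have : l - 2 * n = i := by omega
          exact hkey01 i a b hsa (by omega)
    · by_cases hi2n : i ≤ 2 * n
      · rw [hXmid i (by omega) hi2n] at hti
        by_cases hl2n : l ≤ 2 * n
        · rw [hXmid l (by omega) hl2n] at htl
          rw [hXmid j (by omega) (by omega)]
          exact ⟨hti.1, by omega, by omega⟩
        · exfalso
          rw [hXback l (by omega)] at htl
          omega
      · exfalso
        rw [hXback i (by omega)] at hti
        rw [hXback l (by omega)] at htl
        obtain ⟨hαβt, a, hv, hsa⟩ := hti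
        obtain ⟨-, b, hv', hsb⟩ := htl
        have hiT : i - 2 * n ∈ T t := (hTmem t _).2 ⟨a, Or.inr ⟨hv, hsa⟩⟩
        have hlT : l - 2 * n ∈ T t := (hTmem t _).2 ⟨b, Or.inr ⟨hv', hsb⟩⟩
        have := hαle t _ hiT
        have := hβge t _ hiT
        have := hαle t _ hlT
        have := hβge t _ hlT
        omega
  · -- width
    intro i h1i hi3n
    have hcard : (X i).ncard ≤ p := by
      by_cases hin : i ≤ n
      · -- front: subsingleton
        have hsub : ∀ t ∈ X i, ∀ t' ∈ X i, t = t' := by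
          intro t ht t' ht'
          rw [hXfront i hin] at ht ht'
          obtain ⟨-, a, hu, hsa⟩ := ht
          obtain ⟨-, b, hu', hsb⟩ := ht'
          have : a = b := hkey00 i a b hsa hsb
          rw [← hu, ← hu', this]
        rcases Set.eq_empty_or_nonempty (X i) with he | ⟨x, hx⟩
        · rw [he]; simp
        · have : X i ⊆ {x} := fun y hy => by
            rw [Set.mem_singleton_iff]; exact hsub y hy x hx
          have := Set.ncard_le_ncard this (Set.toFinite _)
          rw [Set.ncard_singleton] at this
          omega
      · by_cases hi2n : i ≤ 2 * n
        · -- middle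
          set m := i - n with hm
          have hm1 : 1 ≤ m := by omega
          have hmn : m ≤ n := by omega
          have hdisj : X i ⊆ {t | OpenPallet (seqSystem arcs) (f (m-1)) t} ∨
              X i ⊆ {t | OpenPallet (seqSystem arcs) (f m) t} := by
            by_cases hex : ∃ t0 ∈ X i, α t0 = m
            · right
              obtain ⟨t0, ht0, hαt0⟩ := hex
              rw [hXmid i (by omega) hi2n] at ht0
              intro t ht
              rw [hXmid i (by omega) hi2n] at ht
              simp only [Set.mem_setOf_eq]
              rw [hopen m hmn]
              refine ⟨by omega, ?_⟩
              by_contra hcon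
              have hβt : β t = m := by omega
              have h1 : m ∈ T t := by rw [← hβt]; exact hβmem t
              have h2 : m ∈ T t0 := by rw [← hαt0]; exact hαmem t0
              have : t = t0 := hlab m t t0 h1 h2
              rw [this] at hβt
              omega
            · left
              intro t ht
              have htX := ht
              rw [hXmid i (by omega) hi2n] at ht
              have hαt : α t ≠ m := fun hcon => hex ⟨t, htX, hcon⟩
              simp only [Set.mem_setOf_eq]
              rw [hopen (m-1) (by omega)]
              constructor
              · omega
              · omega
          rcases hdisj with hsub | hsub
          · have h1 := Set.ncard_le_ncard hsub (Set.toFinite _)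
            have h2 := hbound (m-1) (by omega)
            rw [numOpen] at h2
            omega
          · have h1 := Set.ncard_le_ncard hsub (Set.toFinite _)
            have h2 := hbound m (by omega)
            rw [numOpen] at h2
            omega
        · -- back: subsingleton
          have hsub : ∀ t ∈ X i, ∀ t' ∈ X i, t = t' := by
            intro t ht t' ht'
            rw [hXback i (by omega)] at ht ht'
            obtain ⟨-, a, hv, hsa⟩ := ht
            obtain ⟨-, b, hv', hsb⟩ := ht'
            have : a = b := hkey11 (i - 2*n) a b hsa hsb
            rw [← hv, ← hv', this]
          rcases Set.eq_empty_or_nonempty (X i) with he | ⟨x, hx⟩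
          · rw [he]; simp
          · have : X i ⊆ {x} := fun y hy => by
              rw [Set.mem_singleton_iff]; exact hsub y hy x hx
            have := Set.ncard_le_ncard this (Set.toFinite _)
            rw [Set.ncard_singleton] at this
            omega
    omega

end Stmt14Aux
/-- For a loopless digraph `G` (given by its duplicate-free arc list) in which every
vertex is the tail or head of some arc, `G` has directed pathwidth at most `p - 1` iff
its sequence system `Q_G` can be processed with at most `p` stack-up places. -/
theorem stmt14 {V : Type} (arcs : List (V × V)) (hnodup : arcs.Nodup)
    (hloop : ∀ a ∈ arcs, a.1 ≠ a.2)
    (hcover : ∀ v : V, ∃ a ∈ arcs, v = a.1 ∨ v = a.2)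
    (p : ℕ) (hp : 1 ≤ p) :
    dpwLE (Set.univ : Set V) (fun u v => (u, v) ∈ arcs) ((p : ℤ) - 1) ↔
      CanProcess (seqSystem arcs) p := by
  exact ⟨Stmt14Aux.forward arcs hcover hp, Stmt14Aux.backward arcs hcover hp⟩
end
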